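/- arXiv:0910.0989 — 3 statements merged into one kernel-verified Lean document; each statement's English description precedes it below -/
import Mathlib

section
/- Let B ⊂ P^3 × P^2 be the closure of the graph of the rational map P^3 ⇢ P^2 given by the quadrics q_0 = x_0x_2 - x_1^2, q_1 = x_0x_3 - x_1x_2, q_2 = x_1x_3 - x_2^2 defining the twisted cubic X. Then the bihomogeneous ideal of B is generated by the two forms x_0 y_2 - x_1 y_1 + x_2 y_0 and x_1 y_2 - x_2 y_1 + x_3 y_0 arising from the linear syzygies of the quadrics; in particular, these two forms vanish identically when y_i is replaced by q_i. -/
open MvPolynomial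

set_option synthInstance.maxHeartbeats 1000000
set_option maxHeartbeats 2000000

noncomputable section
namespace Stmt8

variable {k : Type} [Field k]

abbrev Rg (k : Type) [Field k] := MvPolynomial (Fin 4 ⊕ Fin 3) k

def F1 (k : Type) [Field k] : Rg k :=
  X (Sum.inl 0) * X (Sum.inr 2) - X (Sum.inl 1) * X (Sum.inr 1) + X (Sum.inl 2) * X (Sum.inr 0)
def F2 (k : Type) [Field k] : Rg k :=
  X (Sum.inl 1) * X (Sum.inr 2) - X (Sum.inl 2) * X (Sum.inr 1) + X (Sum.inl 3) * X (Sum.inr 0)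
def Jdl (k : Type) [Field k] : Ideal (Rg k) := Ideal.span {F1 k, F2 k}
def g1 (k : Type) [Field k] : Rg k :=
  X (Sum.inl 0) * X (Sum.inr 2) - X (Sum.inl 1) * X (Sum.inr 1)
def g2 (k : Type) [Field k] : Rg k :=
  X (Sum.inl 1) * X (Sum.inr 2) - X (Sum.inl 2) * X (Sum.inr 1)

def SetS (k : Type) [Field k] : Set (Fin 4 ⊕ Fin 3 → k) :=
  {w | ∃ (v : Fin 4 → k) (c : k),
    w = Sum.elim v (c • ![v 0 * v 2 - v 1 ^ 2, v 0 * v 3 - v 1 * v 2, v 1 * v 3 - v 2 ^ 2])}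

/-! ### Generic auxiliary lemmas -/

theorem alghom_congr {S : Type} [CommRing S] [Algebra k S] (α β : Rg k →ₐ[k] S)
    (I : Ideal S) (h : ∀ j, α (X j) - β (X j) ∈ I) (F : Rg k) : α F - β F ∈ I := by
  induction F using MvPolynomial.induction_on with
  | C a => simp [AlgHom.commutes]
  | add p q hp hq =>
      have := I.add_mem hp hq
      simpa [map_add, add_sub_add_comm] using this
  | mul_X p j hp =>
      have : α (p * X j) - β (p * X j)
          = α p * (α (X j) - β (X j)) + (α p - β p) * β (X j) := by
        simp [map_mul]; ring
      rw [this]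
      exact I.add_mem (I.mul_mem_left _ (h j)) (I.mul_mem_right _ hp)

lemma eval_aeval' (p : Fin 4 ⊕ Fin 3 → k) (h : Fin 4 ⊕ Fin 3 → Rg k) (F : Rg k) :
    eval p (aeval h F) = eval (fun j => eval p (h j)) F := by
  simp only [aeval_def, algebraMap_eq, eval, coe_eval₂Hom]
  rw [← eval₂_assoc]

lemma prime_X_mv {σ : Type} [DecidableEq σ] (i : σ) :
    Prime (X i : MvPolynomial σ k) := by
  let e : MvPolynomial σ k ≃ₐ[k] Polynomial (MvPolynomial {b : σ // b ≠ i} k) :=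
    (renameEquiv k (Equiv.optionSubtypeNe i).symm).trans
      (optionEquivLeft k {b : σ // b ≠ i})
  have he : e (X i) = Polynomial.X := by
    simp only [e, AlgEquiv.trans_apply, renameEquiv_apply, rename_X,
      Equiv.optionSubtypeNe_symm_self, optionEquivLeft_X_none]
  rw [← (MulEquiv.prime_iff e.toRingEquiv.toMulEquiv : _ ↔ Prime (X i : MvPolynomial σ k))]
  show Prime (e (X i))
  rw [he]
  exact Polynomial.prime_X

/-! ### `g1` is prime -/

def ε73 : (Fin 4 ⊕ Fin 3) ≃ Option (Fin 4 ⊕ Fin 2) where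
  toFun j := match j with
    | .inl i => some (.inl i)
    | .inr 0 => some (.inr 0)
    | .inr 1 => some (.inr 1)
    | .inr 2 => none
  invFun o := match o with
    | none => .inr 2
    | some (.inl i) => .inl i
    | some (.inr 0) => .inr 0
    | some (.inr 1) => .inr 1
  left_inv := by rintro (i | j)
                 · rfl
                 · fin_cases j <;> rfl
  right_inv := by rintro (_ | (i | j))
                  · rfl
                  · rfl
                  · fin_cases j <;> rfl

lemma prime_g1 : Prime (g1 k) := by
  classical
  let e : Rg k ≃ₐ[k] Polynomial (MvPolynomial (Fin 4 ⊕ Fin 2) k) :=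
    (renameEquiv k ε73).trans (optionEquivLeft k (Fin 4 ⊕ Fin 2))
  rw [← (MulEquiv.prime_iff e.toRingEquiv.toMulEquiv : _ ↔ Prime (g1 k))]
  show Prime (e (g1 k))
  set f : Polynomial (MvPolynomial (Fin 4 ⊕ Fin 2) k) :=
    Polynomial.C (X (Sum.inl 0)) * Polynomial.X
      + Polynomial.C (-(X (Sum.inl 1) * X (Sum.inr 1))) with hf
  have he : e (g1 k) = f := by
    simp only [e, g1, map_sub, map_mul, AlgEquiv.trans_apply, renameEquiv_apply, rename_X]
    have h1 : ε73 (Sum.inl 0) = some (Sum.inl 0) := rfl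
    have h2 : ε73 (Sum.inr 2) = none := rfl
    have h3 : ε73 (Sum.inl 1) = some (Sum.inl 1) := rfl
    have h4 : ε73 (Sum.inr 1) = some (Sum.inr 1) := rfl
    rw [h1, h2, h3, h4, optionEquivLeft_X_none, optionEquivLeft_X_some,
      optionEquivLeft_X_some, optionEquivLeft_X_some, hf, map_neg, map_mul]
    ring
  rw [he]
  have hx0 : (X (Sum.inl 0) : MvPolynomial (Fin 4 ⊕ Fin 2) k) ≠ 0 := X_ne_zero _
  have hdeg : f.natDegree = 1 := by
    rw [hf]; exact Polynomial.natDegree_linear hx0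
  have hfne : f ≠ 0 := by intro h; rw [h] at hdeg; simp at hdeg
  have hc1 : f.coeff 1 = X (Sum.inl 0) := by rw [hf]; simp
  have hc0 : f.coeff 0 = -(X (Sum.inl 1) * X (Sum.inr 1)) := by rw [hf]; simp
  have main : ∀ P' Q' : Polynomial (MvPolynomial (Fin 4 ⊕ Fin 2) k),
      f = P' * Q' → P'.natDegree = 0 → IsUnit P' := by
    intro P' Q' hPQ' hdeg0
    obtain ⟨c, hc⟩ := Polynomial.natDegree_eq_zero.mp hdeg0
    have hcd1 : c ∣ (X (Sum.inl 0) : MvPolynomial (Fin 4 ⊕ Fin 2) k) := by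
      refine ⟨Q'.coeff 1, ?_⟩
      rw [← hc1, hPQ', ← hc, Polynomial.coeff_C_mul]
    have hcd0 : c ∣ (X (Sum.inl 1) * X (Sum.inr 1) : MvPolynomial (Fin 4 ⊕ Fin 2) k) := by
      rw [← dvd_neg, ← hc0]
      refine ⟨Q'.coeff 0, ?_⟩
      rw [hPQ', ← hc, Polynomial.coeff_C_mul]
    obtain ⟨d, hd⟩ := hcd1
    rcases (prime_X_mv (k := k) (Sum.inl 0 : Fin 4 ⊕ Fin 2)).irreducible.isUnit_or_isUnit hd
      with hu | hu
    · rw [← hc]; exact Polynomial.isUnit_C.mpr hu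
    · exfalso
      obtain ⟨d', hdd'⟩ := isUnit_iff_exists_inv.mp hu
      have hXc : (X (Sum.inl 0) : MvPolynomial (Fin 4 ⊕ Fin 2) k) ∣ c :=
        ⟨d', by rw [hd]; rw [mul_assoc, hdd', mul_one]⟩
      obtain ⟨t, ht⟩ := hXc.trans hcd0
      have := congrArg (eval (Sum.elim (![0,1,1,1] : Fin 4 → k) ![1,1])) ht
      simp at this
  have hirr : Irreducible f := by
    constructor
    · intro hu
      have h0 := Polynomial.natDegree_eq_zero_of_isUnit hu
      rw [h0] at hdeg; exact zero_ne_one hdeg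
    · intro P Q hPQ
      have hP0 : P ≠ 0 := fun h => hfne (by rw [hPQ, h, zero_mul])
      have hQ0 : Q ≠ 0 := fun h => hfne (by rw [hPQ, h, mul_zero])
      have hsum : P.natDegree + Q.natDegree = 1 := by
        rw [← Polynomial.natDegree_mul hP0 hQ0, ← hPQ, hdeg]
      rcases Nat.add_eq_one_iff.mp hsum with ⟨hP1, _⟩ | ⟨_, hQ1⟩
      · exact Or.inl (main P Q hPQ hP1)
      · exact Or.inr (main Q P (by rw [hPQ, mul_comm]) hQ1)
  exact UniqueFactorizationMonoid.irreducible_iff_prime.mp hirr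

/-! ### `X (inr 0)` is a nonzerodivisor mod `Jdl` -/

def psub (k : Type) [Field k] : Fin 4 ⊕ Fin 3 → Rg k
  | Sum.inr 0 => 0
  | j => X j

lemma psub_inl (i : Fin 4) : psub k (Sum.inl i) = X (Sum.inl i) := rfl

theorem y0_cancel {G : Rg k} (h : X (Sum.inr 0) * G ∈ Jdl k) : G ∈ Jdl k := by
  obtain ⟨A, B, hAB⟩ := Ideal.mem_span_pair.mp h
  set π := aeval (R := k) (psub k) with hπ
  have hπy0 : π (X (Sum.inr 0) : Rg k) = 0 := by rw [hπ, aeval_X]; rfl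
  have hπF1 : π (F1 k) = g1 k := by
    rw [hπ, F1, g1]
    simp only [map_add, map_sub, map_mul, aeval_X]
    have e0 : psub k (Sum.inr 0) = 0 := rfl
    have e1 : psub k (Sum.inr 1) = X (Sum.inr 1) := rfl
    have e2 : psub k (Sum.inr 2) = X (Sum.inr 2) := rfl
    rw [e0, e1, e2, psub_inl, psub_inl, psub_inl]
    ring
  have hπF2 : π (F2 k) = g2 k := by
    rw [hπ, F2, g2]
    simp only [map_add, map_sub, map_mul, aeval_X]
    have e0 : psub k (Sum.inr 0) = 0 := rfl
    have e1 : psub k (Sum.inr 1) = X (Sum.inr 1) := rfl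
    have e2 : psub k (Sum.inr 2) = X (Sum.inr 2) := rfl
    rw [e0, e1, e2, psub_inl, psub_inl, psub_inl]
    ring
  have heq : π A * g1 k + π B * g2 k = 0 := by
    have := congrArg π hAB
    rw [map_add, map_mul, map_mul, hπF1, hπF2, map_mul, hπy0, zero_mul] at this
    exact this
  have hdiff : ∀ C : Rg k, C - π C ∈ Ideal.span ({X (Sum.inr 0)} : Set (Rg k)) := by
    intro C
    have := alghom_congr (AlgHom.id k (Rg k)) π (Ideal.span {X (Sum.inr 0)}) ?_ C
    · simpa using this
    · have h0 : (AlgHom.id k (Rg k)) (X (Sum.inr 0)) - π (X (Sum.inr 0))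
          ∈ Ideal.span ({X (Sum.inr 0)} : Set (Rg k)) := by
        simp only [AlgHom.coe_id, id_eq, hπ, aeval_X]
        have e0 : psub k (Sum.inr 0) = 0 := rfl
        rw [e0, sub_zero]
        exact Ideal.subset_span rfl
      have h1 : (AlgHom.id k (Rg k)) (X (Sum.inr 1)) - π (X (Sum.inr 1))
          ∈ Ideal.span ({X (Sum.inr 0)} : Set (Rg k)) := by
        have e1 : psub k (Sum.inr 1) = X (Sum.inr 1) := rfl
        simp [hπ, e1]
      have h2 : (AlgHom.id k (Rg k)) (X (Sum.inr 2)) - π (X (Sum.inr 2))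
          ∈ Ideal.span ({X (Sum.inr 0)} : Set (Rg k)) := by
        have e2 : psub k (Sum.inr 2) = X (Sum.inr 2) := rfl
        simp [hπ, e2]
      rintro (i | j)
      · simp [hπ, psub_inl]
      · fin_cases j
        · exact h0
        · exact h1
        · exact h2
  obtain ⟨A₁, hA1⟩ := Ideal.mem_span_singleton'.mp (hdiff A)
  obtain ⟨B₁, hB1⟩ := Ideal.mem_span_singleton'.mp (hdiff B)
  have hdvd' : g1 k ∣ π B * g2 k := ⟨-(π A), by linear_combination heq⟩
  have hg1g2 : ¬ (g1 k ∣ g2 k) := by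
    rintro ⟨t, ht⟩
    have := congrArg (eval (Sum.elim (![0,0,1,0] : Fin 4 → k) ![0,1,0])) ht
    simp [g1, g2] at this
  have hdvd : g1 k ∣ π B :=
    ((prime_g1.2.2 _ _ hdvd').resolve_right hg1g2)
  obtain ⟨D, hD⟩ := hdvd
  have hπA : π A = -(D * g2 k) := by
    have hcan : π A * g1 k = (-(D * g2 k)) * g1 k := by
      linear_combination heq - g2 k * hD
    exact mul_right_cancel₀ prime_g1.1 hcan
  have keyI : g1 k * F2 k - g2 k * F1 k
      = X (Sum.inr 0) * (X (Sum.inl 3) * F1 k - X (Sum.inl 2) * F2 k) := by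
    rw [g1, g2, F1, F2]; ring
  have hmain : X (Sum.inr 0) * G = X (Sum.inr 0) *
      (A₁ * F1 k + B₁ * F2 k + D * (X (Sum.inl 3) * F1 k - X (Sum.inl 2) * F2 k)) := by
    linear_combination (-(1:Rg k)) * hAB - F1 k * hA1 - F2 k * hB1 + F1 k * hπA
      + F2 k * hD + D * keyI
  have hG : G = A₁ * F1 k + B₁ * F2 k
      + D * (X (Sum.inl 3) * F1 k - X (Sum.inl 2) * F2 k) :=
    mul_left_cancel₀ (X_ne_zero _) hmain
  rw [hG]
  exact Ideal.mem_span_pair.mpr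
    ⟨A₁ + D * X (Sum.inl 3), B₁ - D * X (Sum.inl 2), by ring⟩

theorem y0_pow_cancel (m : ℕ) {G : Rg k}
    (h : X (Sum.inr 0) ^ m * G ∈ Jdl k) : G ∈ Jdl k := by
  induction m with
  | zero => simpa using h
  | succ m ih =>
      apply ih
      have h' : X (Sum.inr 0) * (X (Sum.inr 0) ^ m * G) ∈ Jdl k := by
        rw [← mul_assoc, ← pow_succ']
        exact h
      exact y0_cancel h'

/-! ### weighted-homogeneous machinery -/

def wgt : Fin 4 ⊕ Fin 3 → ℕ := Sum.elim (fun _ => 1) (fun _ => 0)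

def bsub (k : Type) [Field k] : Fin 4 ⊕ Fin 3 → Rg k :=
  fun j => X (Sum.inr 0) ^ (2 * wgt j) * X j

lemma aeval_bsub_homog {P : Rg k} {n : ℕ} (h : P.IsWeightedHomogeneous wgt n) :
    aeval (bsub k) P = X (Sum.inr 0) ^ (2*n) * P := by
  conv_lhs => rw [P.as_sum]
  conv_rhs => rw [P.as_sum]
  rw [map_sum, Finset.mul_sum]
  apply Finset.sum_congr rfl
  intro m hm
  have hw : Finsupp.weight wgt m = n := h (mem_support_iff.mp hm)
  rw [aeval_monomial]
  have hprod : (m.prod fun j e => bsub k j ^ e)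
      = X (Sum.inr 0) ^ (2*n) * m.prod fun j e => X j ^ e := by
    rw [Finsupp.prod, Finsupp.prod]
    calc ∏ j ∈ m.support, bsub k j ^ m j
        = ∏ j ∈ m.support, (X (Sum.inr 0) ^ (2 * (m j • wgt j)) * X j ^ m j) := by
          apply Finset.prod_congr rfl; intro j _
          rw [bsub, mul_pow, ← pow_mul]
          congr 2
          simp [smul_eq_mul]
          ring
      _ = (∏ j ∈ m.support, X (Sum.inr 0) ^ (2 * (m j • wgt j)))
            * ∏ j ∈ m.support, X j ^ m j := Finset.prod_mul_distrib
      _ = X (Sum.inr 0) ^ (2*n) * ∏ j ∈ m.support, X j ^ m j := by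
          rw [Finset.prod_pow_eq_pow_sum]
          congr 1
          rw [← Finset.mul_sum]
          congr 1
          rw [← hw, Finsupp.weight_apply, Finsupp.sum]
  rw [hprod, monomial_eq, algebraMap_eq]
  ring

lemma homog_pow_y0 (m : ℕ) :
    (X (Sum.inr 0) ^ m : Rg k).IsWeightedHomogeneous wgt 0 := by
  induction m with
  | zero => simpa using isWeightedHomogeneous_one k wgt
  | succ m ih =>
      have := ih.mul (isWeightedHomogeneous_X k wgt (Sum.inr 0))
      simpa [pow_succ, wgt] using this

lemma F_eq_sum' (F : Rg k) :
    F = ∑ i ∈ (weightedHomogeneousComponent_finsupp (w := wgt) F).toFinset,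
      weightedHomogeneousComponent wgt i F := by
  rw [← finsum_eq_sum _ (weightedHomogeneousComponent_finsupp F),
    sum_weightedHomogeneousComponent]

lemma comp_aeval_bsub (F : Rg k) (n : ℕ) :
    weightedHomogeneousComponent wgt n (aeval (bsub k) F)
      = X (Sum.inr 0) ^ (2*n) * weightedHomogeneousComponent wgt n F := by
  set T := (weightedHomogeneousComponent_finsupp (w := wgt) F).toFinset with hT
  have hdec : F = ∑ i ∈ T, weightedHomogeneousComponent wgt i F := F_eq_sum' F
  have lhs : aeval (bsub k) F
      = ∑ i ∈ T, X (Sum.inr 0) ^ (2*i) * weightedHomogeneousComponent wgt i F := by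
    conv_lhs => rw [hdec]
    rw [map_sum]
    exact Finset.sum_congr rfl fun i _ =>
      aeval_bsub_homog (weightedHomogeneousComponent_isWeightedHomogeneous i F)
  rw [lhs, map_sum]
  have hterm : ∀ i ∈ T, weightedHomogeneousComponent wgt n
      (X (Sum.inr 0) ^ (2*i) * weightedHomogeneousComponent wgt i F)
      = if i = n then X (Sum.inr 0) ^ (2*n) * weightedHomogeneousComponent wgt n F else 0 := by
    intro i _
    have hh : (X (Sum.inr 0) ^ (2*i) * weightedHomogeneousComponent wgt i F
        : Rg k).IsWeightedHomogeneous wgt i := by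
      have := (homog_pow_y0 (k := k) (2*i)).mul
        (weightedHomogeneousComponent_isWeightedHomogeneous i F)
      simpa using this
    by_cases hi : i = n
    · subst hi
      rw [if_pos rfl]
      exact hh.weightedHomogeneousComponent_same
    · rw [if_neg hi]
      exact hh.weightedHomogeneousComponent_ne n (fun h => hi h.symm)
  rw [Finset.sum_congr rfl hterm]
  by_cases hn : n ∈ T
  · rw [Finset.sum_ite_eq' T n (fun _ => X (Sum.inr 0) ^ (2*n) *
      weightedHomogeneousComponent wgt n F), if_pos hn]
  · rw [Finset.sum_ite_eq' T n (fun _ => X (Sum.inr 0) ^ (2*n) *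
      weightedHomogeneousComponent wgt n F), if_neg hn]
    have hzero : weightedHomogeneousComponent wgt n F = 0 := by
      by_contra hne
      exact hn (by rw [hT]; exact (Set.Finite.mem_toFinset _).mpr hne)
    rw [hzero, mul_zero]

lemma homog_XX (i : Fin 4) (j : Fin 3) :
    (X (Sum.inl i) * X (Sum.inr j) : Rg k).IsWeightedHomogeneous wgt 1 := by
  have := (isWeightedHomogeneous_X k wgt (Sum.inl i)).mul
    (isWeightedHomogeneous_X k wgt (Sum.inr j))
  simpa [wgt] using this

lemma F1_homog : (F1 k).IsWeightedHomogeneous wgt 1 := by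
  rw [F1]
  have h1 := homog_XX (k := k) 0 2
  have h2 := homog_XX (k := k) 1 1
  have h3 := homog_XX (k := k) 2 0
  exact (weightedHomogeneousSubmodule k wgt 1).add_mem
    ((weightedHomogeneousSubmodule k wgt 1).sub_mem h1 h2) h3

lemma F2_homog : (F2 k).IsWeightedHomogeneous wgt 1 := by
  rw [F2]
  have h1 := homog_XX (k := k) 1 2
  have h2 := homog_XX (k := k) 2 1
  have h3 := homog_XX (k := k) 3 0
  exact (weightedHomogeneousSubmodule k wgt 1).add_mem
    ((weightedHomogeneousSubmodule k wgt 1).sub_mem h1 h2) h3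

lemma comp_mul_mem_span {Q : Rg k} (hQ : Q.IsWeightedHomogeneous wgt 1) (A : Rg k) (n : ℕ) :
    weightedHomogeneousComponent wgt n (A * Q) ∈ Ideal.span ({Q} : Set (Rg k)) := by
  set T := (weightedHomogeneousComponent_finsupp (w := wgt) A).toFinset with hT
  have hdec : A * Q = ∑ i ∈ T, weightedHomogeneousComponent wgt i A * Q := by
    rw [← Finset.sum_mul, ← F_eq_sum' A]
  rw [hdec, map_sum]
  apply Ideal.sum_mem
  intro i _
  have hh : (weightedHomogeneousComponent wgt i A * Q).IsWeightedHomogeneous wgt (i + 1) :=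
    (weightedHomogeneousComponent_isWeightedHomogeneous i A).mul hQ
  by_cases hi : n = i + 1
  · have := hh.weightedHomogeneousComponent_same
    rw [hi, this]
    exact Ideal.mul_mem_left _ _ (Ideal.subset_span rfl)
  · rw [hh.weightedHomogeneousComponent_ne n hi]
    exact Ideal.zero_mem _

lemma comp_mem_Jdl {P : Rg k} (hP : P ∈ Jdl k) (n : ℕ) :
    weightedHomogeneousComponent wgt n P ∈ Jdl k := by
  obtain ⟨A, B, hAB⟩ := Ideal.mem_span_pair.mp hP
  rw [← hAB, map_add]
  apply Ideal.add_mem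
  · have := comp_mul_mem_span (F1_homog (k := k)) A n
    refine Ideal.span_mono ?_ this
    intro x hx; rw [hx]; exact Set.mem_insert _ _
  · have := comp_mul_mem_span (F2_homog (k := k)) B n
    refine Ideal.span_mono ?_ this
    intro x hx; rw [hx]; right; rfl

/-! ### the substitution `hsub` and vanishing of `σ'(F)` -/

def hsub (k : Type) [Field k] : Fin 4 ⊕ Fin 3 → Rg k
  | .inl 0 => X (.inr 0) ^ 2 * X (.inl 0)
  | .inl 1 => X (.inr 0) ^ 2 * X (.inl 1)
  | .inl 2 => X (.inr 0) * (X (.inl 1) * X (.inr 1) - X (.inl 0) * X (.inr 2))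
  | .inl 3 => X (.inl 1) * X (.inr 1) ^ 2 - X (.inl 0) * X (.inr 1) * X (.inr 2)
      - X (.inl 1) * X (.inr 0) * X (.inr 2)
  | .inr j => X (.inr j)

def Wp (k : Type) [Field k] : Rg k :=
  X (Sum.inl 0) * X (Sum.inl 1) * X (Sum.inr 1) - X (Sum.inl 0) ^ 2 * X (Sum.inr 2)
    - X (Sum.inl 1) ^ 2 * X (Sum.inr 0)

theorem sigma_zero (F : Rg k) [Infinite k]
    (hF : ∀ w ∈ SetS k, eval w F = 0) : aeval (hsub k) F = 0 := by
  have key : (X (Sum.inr 0) * Wp k) * aeval (hsub k) F = 0 := by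
    apply MvPolynomial.funext (q := 0)
    intro p
    rw [map_zero, map_mul]
    have hW : eval p (X (Sum.inr 0) * Wp k)
        = p (Sum.inr 0) * (p (Sum.inl 0) * p (Sum.inl 1) * p (Sum.inr 1)
            - p (Sum.inl 0)^2 * p (Sum.inr 2) - p (Sum.inl 1)^2 * p (Sum.inr 0)) := by
      simp [Wp]; try ring
    by_cases hz : p (Sum.inr 0) * (p (Sum.inl 0) * p (Sum.inl 1) * p (Sum.inr 1)
        - p (Sum.inl 0)^2 * p (Sum.inr 2) - p (Sum.inl 1)^2 * p (Sum.inr 0)) = 0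
    · simp [hW, hz]
    · have hb0 : p (Sum.inr 0) ≠ 0 := fun h => hz (by rw [h, zero_mul])
      have hω : (p (Sum.inl 0) * p (Sum.inl 1) * p (Sum.inr 1)
          - p (Sum.inl 0)^2 * p (Sum.inr 2) - p (Sum.inl 1)^2 * p (Sum.inr 0)) ≠ 0 :=
        fun h => hz (by rw [h, mul_zero])
      have hz' : eval p (aeval (hsub k) F) = 0 := by
        rw [eval_aeval']
        apply hF
        refine ⟨fun i => eval p (hsub k (Sum.inl i)),
          (p (Sum.inr 0)^2 * (p (Sum.inl 0) * p (Sum.inl 1) * p (Sum.inr 1)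
            - p (Sum.inl 0)^2 * p (Sum.inr 2) - p (Sum.inl 1)^2 * p (Sum.inr 0)))⁻¹, ?_⟩
        have hv0 : eval p (hsub k (Sum.inl 0)) = p (Sum.inr 0)^2 * p (Sum.inl 0) := by
          simp [hsub]
        have hv1 : eval p (hsub k (Sum.inl 1)) = p (Sum.inr 0)^2 * p (Sum.inl 1) := by
          simp [hsub]
        have hv2 : eval p (hsub k (Sum.inl 2))
            = p (Sum.inr 0) * (p (Sum.inl 1) * p (Sum.inr 1) - p (Sum.inl 0) * p (Sum.inr 2)) := by
          simp [hsub]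
        have hv3 : eval p (hsub k (Sum.inl 3))
            = p (Sum.inl 1) * p (Sum.inr 1)^2 - p (Sum.inl 0) * p (Sum.inr 1) * p (Sum.inr 2)
              - p (Sum.inl 1) * p (Sum.inr 0) * p (Sum.inr 2) := by
          simp [hsub]
        have hne : (p (Sum.inr 0)^2 * (p (Sum.inl 0) * p (Sum.inl 1) * p (Sum.inr 1)
            - p (Sum.inl 0)^2 * p (Sum.inr 2) - p (Sum.inl 1)^2 * p (Sum.inr 0))) ≠ 0 :=
          mul_ne_zero (pow_ne_zero _ hb0) hω
        have c0 : p (Sum.inr 0) = ((p (Sum.inr 0)^2 * (p (Sum.inl 0) * p (Sum.inl 1) * p (Sum.inr 1)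
            - p (Sum.inl 0)^2 * p (Sum.inr 2) - p (Sum.inl 1)^2 * p (Sum.inr 0)))⁻¹ •
            ![eval p (hsub k (Sum.inl 0)) * eval p (hsub k (Sum.inl 2)) - eval p (hsub k (Sum.inl 1)) ^ 2,
              eval p (hsub k (Sum.inl 0)) * eval p (hsub k (Sum.inl 3))
                - eval p (hsub k (Sum.inl 1)) * eval p (hsub k (Sum.inl 2)),
              eval p (hsub k (Sum.inl 1)) * eval p (hsub k (Sum.inl 3))
                - eval p (hsub k (Sum.inl 2)) ^ 2]) 0 := by
          simp only [Pi.smul_apply, Matrix.cons_val_zero, smul_eq_mul, hv0, hv1, hv2, hv3]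
          rw [eq_comm, inv_mul_eq_iff_eq_mul₀ hne]
          ring
        have c1 : p (Sum.inr 1) = ((p (Sum.inr 0)^2 * (p (Sum.inl 0) * p (Sum.inl 1) * p (Sum.inr 1)
            - p (Sum.inl 0)^2 * p (Sum.inr 2) - p (Sum.inl 1)^2 * p (Sum.inr 0)))⁻¹ •
            ![eval p (hsub k (Sum.inl 0)) * eval p (hsub k (Sum.inl 2)) - eval p (hsub k (Sum.inl 1)) ^ 2,
              eval p (hsub k (Sum.inl 0)) * eval p (hsub k (Sum.inl 3))
                - eval p (hsub k (Sum.inl 1)) * eval p (hsub k (Sum.inl 2)),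
              eval p (hsub k (Sum.inl 1)) * eval p (hsub k (Sum.inl 3))
                - eval p (hsub k (Sum.inl 2)) ^ 2]) 1 := by
          simp only [Pi.smul_apply, Matrix.cons_val_one, Matrix.head_cons, smul_eq_mul,
            Matrix.cons_val_zero, hv0, hv1, hv2, hv3]
          rw [eq_comm, inv_mul_eq_iff_eq_mul₀ hne]
          ring
        have c2 : p (Sum.inr 2) = ((p (Sum.inr 0)^2 * (p (Sum.inl 0) * p (Sum.inl 1) * p (Sum.inr 1)
            - p (Sum.inl 0)^2 * p (Sum.inr 2) - p (Sum.inl 1)^2 * p (Sum.inr 0)))⁻¹ •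
            ![eval p (hsub k (Sum.inl 0)) * eval p (hsub k (Sum.inl 2)) - eval p (hsub k (Sum.inl 1)) ^ 2,
              eval p (hsub k (Sum.inl 0)) * eval p (hsub k (Sum.inl 3))
                - eval p (hsub k (Sum.inl 1)) * eval p (hsub k (Sum.inl 2)),
              eval p (hsub k (Sum.inl 1)) * eval p (hsub k (Sum.inl 3))
                - eval p (hsub k (Sum.inl 2)) ^ 2]) 2 := by
          simp only [Pi.smul_apply, Matrix.cons_val_two, Matrix.tail_cons, Matrix.head_cons,
            smul_eq_mul, hv0, hv1, hv2, hv3]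
          rw [eq_comm, inv_mul_eq_iff_eq_mul₀ hne]
          ring
        funext j
        rcases j with i | j
        · rfl
        · fin_cases j
          · simpa [hsub] using c0
          · simpa [hsub] using c1
          · simpa [hsub] using c2
      rw [hz', mul_zero]
  have hnz : (X (Sum.inr 0) * Wp k : Rg k) ≠ 0 := by
    intro h
    have := congrArg (eval (Sum.elim ![1,0,0,0] ![1,0,-1])) h
    simp [Wp] at this
  rcases mul_eq_zero.mp key with h | h
  · exact absurd h hnz
  · exact h

/-! ### the hard inclusion -/

theorem hard [Infinite k] (F : Rg k) (hF : ∀ w ∈ SetS k, eval w F = 0) : F ∈ Jdl k := by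
  have h1 : aeval (hsub k) F = 0 := sigma_zero F hF
  have hgen : ∀ j, (aeval (hsub k) : Rg k →ₐ[k] Rg k) (X j) - (aeval (bsub k) : Rg k →ₐ[k] Rg k) (X j) ∈ Jdl k := by
    have m0 : (aeval (hsub k) : Rg k →ₐ[k] Rg k) (X (Sum.inl 0))
        - (aeval (bsub k) : Rg k →ₐ[k] Rg k) (X (Sum.inl 0)) ∈ Jdl k := by
      rw [aeval_X, aeval_X]
      have e : hsub k (Sum.inl 0) - bsub k (Sum.inl 0) = 0 := by
        simp only [hsub, bsub, wgt, Sum.elim_inl]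
        ring
      rw [e]; exact (Jdl k).zero_mem
    have m1 : (aeval (hsub k) : Rg k →ₐ[k] Rg k) (X (Sum.inl 1))
        - (aeval (bsub k) : Rg k →ₐ[k] Rg k) (X (Sum.inl 1)) ∈ Jdl k := by
      rw [aeval_X, aeval_X]
      have e : hsub k (Sum.inl 1) - bsub k (Sum.inl 1) = 0 := by
        simp only [hsub, bsub, wgt, Sum.elim_inl]
        ring
      rw [e]; exact (Jdl k).zero_mem
    have m2 : (aeval (hsub k) : Rg k →ₐ[k] Rg k) (X (Sum.inl 2))
        - (aeval (bsub k) : Rg k →ₐ[k] Rg k) (X (Sum.inl 2)) ∈ Jdl k := by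
      rw [aeval_X, aeval_X]
      apply Ideal.mem_span_pair.mpr
      refine ⟨-(X (Sum.inr 0)), 0, ?_⟩
      rw [F1, F2]
      simp only [hsub, bsub, wgt, Sum.elim_inl]
      ring
    have m3 : (aeval (hsub k) : Rg k →ₐ[k] Rg k) (X (Sum.inl 3))
        - (aeval (bsub k) : Rg k →ₐ[k] Rg k) (X (Sum.inl 3)) ∈ Jdl k := by
      rw [aeval_X, aeval_X]
      apply Ideal.mem_span_pair.mpr
      refine ⟨-(X (Sum.inr 1)), -(X (Sum.inr 0)), ?_⟩
      rw [F1, F2]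
      simp only [hsub, bsub, wgt, Sum.elim_inl]
      ring
    have mr : ∀ j : Fin 3, (aeval (hsub k) : Rg k →ₐ[k] Rg k) (X (Sum.inr j))
        - (aeval (bsub k) : Rg k →ₐ[k] Rg k) (X (Sum.inr j)) ∈ Jdl k := by
      intro j
      rw [aeval_X, aeval_X]
      have e : hsub k (Sum.inr j) - bsub k (Sum.inr j) = 0 := by
        simp only [hsub, bsub, wgt, Sum.elim_inr]
        ring
      rw [e]; exact (Jdl k).zero_mem
    rintro (i | j)
    · fin_cases i
      · exact m0
      · exact m1
      · exact m2
      · exact m3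
    · exact mr j
  have hcong := alghom_congr (aeval (hsub k)) (aeval (bsub k)) (Jdl k) hgen F
  rw [h1, zero_sub] at hcong
  have h2 : aeval (bsub k) F ∈ Jdl k := by
    have := (Jdl k).neg_mem hcong
    simpa using this
  have h3 : ∀ n, weightedHomogeneousComponent wgt n F ∈ Jdl k := by
    intro n
    have := comp_mem_Jdl h2 n
    rw [comp_aeval_bsub] at this
    exact y0_pow_cancel _ this
  rw [F_eq_sum' F]
  exact Ideal.sum_mem _ fun i _ => h3 i

end Stmt8
end


/-- Let `B ⊂ ℙ³ × ℙ²` be the closure of the graph of the rational map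
`ℙ³ ⇢ ℙ²` given by the quadrics `q₀ = x₀x₂ - x₁²`, `q₁ = x₀x₃ - x₁x₂`, `q₂ = x₁x₃ - x₂²`
defining the twisted cubic.  Then the bihomogeneous ideal of `B` (here the vanishing
ideal of the cone over the graph) is generated by the two linear-syzygy forms
`x₀y₂ - x₁y₁ + x₂y₀` and `x₁y₂ - x₂y₁ + x₃y₀`; in particular these two forms vanish
identically when `yᵢ` is replaced by `qᵢ`. -/
theorem stmt_8 (k : Type) [Field k] [IsAlgClosed k] :
    (vanishingIdeal k
        {w : Fin 4 ⊕ Fin 3 → k | ∃ (v : Fin 4 → k) (c : k),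
          w = Sum.elim v (c • ![v 0 * v 2 - v 1 ^ 2, v 0 * v 3 - v 1 * v 2,
            v 1 * v 3 - v 2 ^ 2])} =
      Ideal.span
        {(X (Sum.inl 0) * X (Sum.inr 2) - X (Sum.inl 1) * X (Sum.inr 1) +
            X (Sum.inl 2) * X (Sum.inr 0) : MvPolynomial (Fin 4 ⊕ Fin 3) k),
          X (Sum.inl 1) * X (Sum.inr 2) - X (Sum.inl 2) * X (Sum.inr 1) +
            X (Sum.inl 3) * X (Sum.inr 0)}) ∧
    (∀ F ∈ ({(X (Sum.inl 0) * X (Sum.inr 2) - X (Sum.inl 1) * X (Sum.inr 1) +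
            X (Sum.inl 2) * X (Sum.inr 0) : MvPolynomial (Fin 4 ⊕ Fin 3) k),
          X (Sum.inl 1) * X (Sum.inr 2) - X (Sum.inl 2) * X (Sum.inr 1) +
            X (Sum.inl 3) * X (Sum.inr 0)} : Set (MvPolynomial (Fin 4 ⊕ Fin 3) k)),
      aeval (Sum.elim (X : Fin 4 → MvPolynomial (Fin 4) k)
        ![X 0 * X 2 - X 1 ^ 2, X 0 * X 3 - X 1 * X 2, X 1 * X 3 - X 2 ^ 2]) F = 0) := by
  constructor
  · apply le_antisymm
    · intro F hF
      have hF' : ∀ w ∈ Stmt8.SetS k, eval w F = 0 := by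
        intro w hw
        exact mem_vanishingIdeal_iff.mp hF w hw
      exact Stmt8.hard F hF'
    · rw [Ideal.span_le]
      rintro x hx
      simp only [Set.mem_insert_iff, Set.mem_singleton_iff] at hx
      rw [SetLike.mem_coe, mem_vanishingIdeal_iff]
      rintro w ⟨v, c, rfl⟩
      rcases hx with rfl | rfl <;>
      · simp only [map_add, map_sub, map_mul, eval_X, aeval_X, Sum.elim_inl, Sum.elim_inr,
          Pi.smul_apply, smul_eq_mul, Matrix.cons_val_zero, Matrix.cons_val_one,
          Matrix.head_cons, Matrix.cons_val_two, Matrix.tail_cons]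
        ring
  · intro F hFmem
    simp only [Set.mem_insert_iff, Set.mem_singleton_iff] at hFmem
    rcases hFmem with rfl | rfl <;>
    · simp only [map_add, map_sub, map_mul, aeval_X, Sum.elim_inl, Sum.elim_inr,
        Matrix.cons_val_zero, Matrix.cons_val_one, Matrix.head_cons,
        Matrix.cons_val_two, Matrix.tail_cons]
      ring
end

section
/- Let I(X) ⊂ k[x_0,...,x_n] be the homogeneous ideal of a projective variety X, generated in degree 2, and let Σ_1(X) be its first secant variety (closure of the union of lines through pairs of points of X). Then every homogeneous form of degree 3 in I(Σ_1(X)) has all of its first partial derivatives in I(X)_2; that is, I(Σ_1(X))_3 is contained in the prolongation of I(X)_2. -/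
open MvPolynomial


variable {k : Type} [Field k] {m : ℕ}

-- eval of homogeneous at scalar multiple
lemma my_eval_smul {n : ℕ} {φ : MvPolynomial (Fin m) k}
    (h : φ.IsHomogeneous n) (t : k) (x : Fin m → k) :
    eval (t • x) φ = t ^ n * eval x φ := by
  rw [eval_eq', eval_eq', Finset.mul_sum]
  apply Finset.sum_congr rfl
  intro d hd
  have hdeg : d.degree = n := by
    rw [Finsupp.degree_eq_weight_one]
    exact h (mem_support_iff.mp hd)
  have hsum : ∑ i, d i = n := by
    rw [← hdeg, Finsupp.degree]
    exact (Finset.sum_subset (Finset.subset_univ _)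
      (fun i _ hi => Finsupp.notMem_support_iff.mp hi)).symm
  calc coeff d φ * ∏ i, (t • x) i ^ d i
      = coeff d φ * ∏ i, (t ^ d i * x i ^ d i) := by
        simp [Pi.smul_apply, smul_eq_mul, mul_pow]
    _ = t ^ n * (coeff d φ * ∏ i, x i ^ d i) := by
        rw [Finset.prod_mul_distrib, Finset.prod_pow_eq_pow_sum, hsum]; ring

lemma my_cone {I : Ideal (MvPolynomial (Fin m) k)}
    (hIquad : I = Ideal.span {f : MvPolynomial (Fin m) k | f ∈ I ∧ f.IsHomogeneous 2})
    {x : Fin m → k} (hx : x ∈ zeroLocus k I) (t : k) : t • x ∈ zeroLocus k I := by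
  rw [mem_zeroLocus_iff] at hx ⊢
  change ∀ p ∈ I, eval x p = 0 at hx
  show ∀ p ∈ I, eval (t • x) p = 0
  intro p hp
  rw [hIquad] at hp
  induction hp using Submodule.span_induction with
  | mem q hq => rw [my_eval_smul hq.2 t x, hx q hq.1, mul_zero]
  | zero => simp
  | add a b _ _ ha hb => rw [map_add, ha, hb, add_zero]
  | smul a b hb ih => rw [smul_eq_mul, map_mul, ih, mul_zero]

lemma my_hc1_mul (a q : MvPolynomial (Fin m) k) (hq : q.IsHomogeneous 2) :
    homogeneousComponent 1 (a * q) = 0 := by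
  apply homogeneousComponent_eq_zero'
  intro d hd hdeg
  rw [mem_support_iff] at hd
  apply hd
  rw [coeff_mul]
  apply Finset.sum_eq_zero
  rintro ⟨u, v⟩ huv
  rw [Finset.HasAntidiagonal.mem_antidiagonal] at huv
  by_cases h : coeff v q = 0
  · rw [h, mul_zero]
  · exfalso
    have h2 : v.degree = 2 := by
      rw [Finsupp.degree_eq_weight_one]; exact hq h
    have : u.degree + v.degree = 1 := by
      simp only [Finsupp.degree_eq_weight_one] at hdeg ⊢
      rw [← map_add, huv]; exact hdeg
    omega

lemma my_hc1_I {I : Ideal (MvPolynomial (Fin m) k)}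
    (hIquad : I = Ideal.span {f : MvPolynomial (Fin m) k | f ∈ I ∧ f.IsHomogeneous 2})
    {g : MvPolynomial (Fin m) k} (hg : g ∈ I) : homogeneousComponent 1 g = 0 := by
  rw [hIquad, Ideal.span] at hg
  rw [Submodule.mem_span_set] at hg
  obtain ⟨c, hcs, rfl⟩ := hg
  rw [map_finsuppSum]
  apply Finset.sum_eq_zero
  intro q hq
  exact my_hc1_mul _ q (hcs hq).2

noncomputable def mySub (x y : Fin m → k) : Fin m → Polynomial k :=
  fun j => Polynomial.C (x j) + Polynomial.X * Polynomial.C (y j)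

lemma my_eval_aeval (x y : Fin m → k) (f : MvPolynomial (Fin m) k) (t : k) :
    Polynomial.eval t (aeval (mySub x y) f) = eval (x + t • y) f := by
  rw [aeval_def, ← Polynomial.coe_evalRingHom, eval₂_comp_left]
  rw [show (Polynomial.evalRingHom t).comp (algebraMap k (Polynomial k)) = RingHom.id k by
    ext r; simp]
  rw [show ((Polynomial.evalRingHom t) ∘ (mySub x y)) = x + t • y by
    funext j; simp [mySub]; ring]
  rfl

lemma my_coeff_zero (x y : Fin m → k) (f : MvPolynomial (Fin m) k) :
    (aeval (mySub x y) f).coeff 0 = eval x f := by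
  rw [Polynomial.coeff_zero_eq_eval_zero, my_eval_aeval]
  simp

lemma my_coeff_one (x y : Fin m → k) (f : MvPolynomial (Fin m) k) :
    (aeval (mySub x y) f).coeff 1 = ∑ j, y j * eval x (pderiv j f) := by
  induction f using MvPolynomial.induction_on with
  | C a => simp
  | add p q hp hq =>
      simp only [map_add, Polynomial.coeff_add, hp, hq, mul_add, Finset.sum_add_distrib]
  | mul_X p i hp =>
      have : aeval (mySub x y) (p * X i)
          = (aeval (mySub x y) p * Polynomial.C (x i))
            + (aeval (mySub x y) p * Polynomial.X * Polynomial.C (y i)) := by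
        simp only [map_mul, aeval_X, mySub]; ring
      rw [this, Polynomial.coeff_add, Polynomial.coeff_mul_C, Polynomial.coeff_mul_C,
        Polynomial.coeff_mul_X, hp, my_coeff_zero]
      have hds : ∀ j : Fin m, y j * eval x (pderiv j (p * X i))
          = y j * eval x (pderiv j p) * x i
            + (if j = i then y j * eval x p else 0) := by
        intro j
        rw [pderiv_mul, pderiv_X]
        by_cases h : j = i
        · subst h; simp [Pi.single_eq_same]; ring
        · simp [Pi.single_eq_of_ne h, h]; ring
      rw [Finset.sum_congr rfl (fun j _ => hds j), Finset.sum_add_distrib,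
        Finset.sum_ite_eq' Finset.univ i (fun j => y j * eval x p)]
      simp [Finset.sum_mul]
      ring

lemma my_pderiv_homog {f : MvPolynomial (Fin m) k} {nn : ℕ}
    (hf : f.IsHomogeneous (nn + 1)) (i : Fin m) : (pderiv i f).IsHomogeneous nn := by
  conv_lhs => rw [← support_sum_monomial_coeff f]
  rw [map_sum]
  apply IsHomogeneous.sum
  intro d hd
  rw [pderiv_monomial]
  by_cases hdi : d i = 0
  · rw [hdi, Nat.cast_zero, mul_zero, monomial_zero]; exact isHomogeneous_zero _ _ _
  · apply isHomogeneous_monomial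
    have hdd : d.degree = nn + 1 := by
      rw [Finsupp.degree_eq_weight_one]
      exact hf (mem_support_iff.mp hd)
    have hle : Finsupp.single i 1 ≤ d := by
      rw [Finsupp.single_le_iff]; omega
    have hadd : (d - Finsupp.single i 1) + Finsupp.single i 1 = d :=
      tsub_add_cancel_of_le hle
    have : (d - Finsupp.single i 1).degree + (Finsupp.single i 1).degree = d.degree := by
      simp only [Finsupp.degree_eq_weight_one, ← map_add, hadd]
    have h1 : (Finsupp.single i (1:ℕ)).degree = 1 := by
      rw [Finsupp.degree_single]
    omega

/-- Let `I = I(X) ⊆ k[x₀,…,x_n]` be the homogeneous ideal of a projective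
variety `X` (so `I` is the full vanishing ideal of its zero locus, here the affine cone
`Z`), generated in degree 2.  Every degree-3 form in the ideal of the first secant
variety `Σ₁(X)` — i.e. every degree-3 form vanishing on all sums `x + y` of points of the
cone — has all its first partial derivatives in `I(X)₂`: they are quadrics lying in `I`.
Thus `I(Σ₁(X))₃` is contained in the prolongation of `I(X)₂`. -/
theorem stmt_14 (k : Type) [Field k] [IsAlgClosed k] [CharZero k] (n : ℕ)
    (I : Ideal (MvPolynomial (Fin (n + 1)) k))
    (hIrad : vanishingIdeal k (zeroLocus k I) = I)
    (hIquad : I = Ideal.span {f : MvPolynomial (Fin (n + 1)) k | f ∈ I ∧ f.IsHomogeneous 2})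
    (f : MvPolynomial (Fin (n + 1)) k) (hf3 : f.IsHomogeneous 3)
    (hfsec : ∀ x y : Fin (n + 1) → k,
      x ∈ zeroLocus k I → y ∈ zeroLocus k I → eval (x + y) f = 0) :
    ∀ i : Fin (n + 1), pderiv i f ∈ I ∧ (pderiv i f).IsHomogeneous 2 := by
  have key : ∀ x ∈ zeroLocus k I, ∀ j, eval x (pderiv j f) = 0 := by
    intro x hx
    have hsum : ∀ y ∈ zeroLocus k I, ∑ j, y j * eval x (pderiv j f) = 0 := by
      intro y hy
      have hq0 : aeval (mySub x y) f = 0 := by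
        apply Polynomial.funext
        intro t
        rw [my_eval_aeval, Polynomial.eval_zero]
        exact hfsec x (t • y) hx (my_cone hIquad hy t)
      have h1 := my_coeff_one x y f
      rw [hq0] at h1
      simpa using h1.symm
    set v : Fin (n + 1) → k := fun j => eval x (pderiv j f) with hv
    set L : MvPolynomial (Fin (n + 1)) k := ∑ j, C (v j) * X j with hL
    have hLI : L ∈ I := by
      rw [← hIrad, mem_vanishingIdeal_iff]
      intro y hy
      show eval y L = 0
      have : eval y L = ∑ j, y j * v j := by
        simp [hL, eval_sum, mul_comm]
      rw [this]
      exact hsum y hy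
    have hLh : L.IsHomogeneous 1 := by
      apply IsHomogeneous.sum
      intro j _
      exact isHomogeneous_C_mul_X (v j) j
    have hL0 : L = 0 := by
      have := homogeneousComponent_of_mem
        ((mem_homogeneousSubmodule _ _).mpr hLh) (m := 1)
      rw [if_pos rfl] at this
      rw [← this, my_hc1_I hIquad hLI]
    intro j
    have heval := congrArg (eval (Pi.single j 1 : Fin (n + 1) → k)) hL0
    rw [hL] at heval
    simp only [eval_sum, map_mul, eval_C, eval_X, map_zero] at heval
    rw [Finset.sum_eq_single j (fun b _ hb => by
        simp [Pi.single_eq_of_ne hb]) (fun h => absurd (Finset.mem_univ j) h)] at heval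
    simpa [Pi.single_eq_same] using heval
  intro i
  refine ⟨?_, my_pderiv_homog (by exact hf3) i⟩
  rw [← hIrad, mem_vanishingIdeal_iff]
  intro x hx
  show eval x (pderiv i f) = 0
  exact key x hx i
end

section
/- In P^3 × P^2 × P^1 with coordinates x, y, z, let I = ⟨x_i y_j - x_j y_i : i ≠ j ∈ {0,1,2}⟩ + ⟨x_0 z_1 - x_1 z_0, y_1 z_0 - y_0 z_1⟩ be the ideal of the iterated blowup of P^3 at the point p = [0:0:0:1] and then at the proper transform of the line L = V(x_0, x_1). Then the fiber over p, defined by I + ⟨x_0, x_1, x_2⟩ (after saturation in the x-variables), is cut out in {p} × P^2 × P^1 by the single equation y_1 z_0 - y_0 z_1 = 0, i.e., it is the blowup of P^2 at the point [0:0:1]. -/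
open MvPolynomial

lemma aux_sub_aeval {k : Type} [CommRing k] {σ : Type} (s : σ → MvPolynomial σ k)
    (M : Ideal (MvPolynomial σ k)) (hs : ∀ v, X v - s v ∈ M) (f : MvPolynomial σ k) :
    f - aeval s f ∈ M := by
  induction f using MvPolynomial.induction_on with
  | C a => simpa using M.zero_mem
  | add p q hp hq => simpa [add_sub_add_comm] using M.add_mem hp hq
  | mul_X p v hp =>
    have h : p * X v - aeval s (p * X v)
        = (p - aeval s p) * X v + aeval s p * (X v - s v) := by
      simp; ring
    rw [h]
    exact M.add_mem (M.mul_mem_right _ hp) (M.mul_mem_left _ (hs v))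

section AuxMain
variable (k : Type) [Field k]

/-- Variable index type. -/
abbrev Vr := Fin 4 ⊕ Fin 3 ⊕ Fin 2
/-- The trihomogeneous coordinate ring. -/
abbrev Rg (k : Type) [Field k] := MvPolynomial Vr k

/-- The polynomial `y₁ z₀ - y₀ z₁`. -/
noncomputable def gP : Rg k :=
  X (Sum.inr (Sum.inl 1)) * X (Sum.inr (Sum.inr 0)) -
    X (Sum.inr (Sum.inl 0)) * X (Sum.inr (Sum.inr 1))

lemma gP_ne_zero : gP k ≠ 0 := by
  intro h
  have := congrArg (aeval (fun v : Vr => if v = Sum.inr (Sum.inl 1) ∨ v = Sum.inr (Sum.inr 0)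
      then (1:k) else 0)) h
  simp [gP] at this

/-- Substitution setting `x₃` to `0`. -/
noncomputable def s0 : Vr → Rg k := fun v => if v = Sum.inl 3 then 0 else X v

lemma x3_dvd_of_ev0_eq_zero (h : Rg k) (hh : aeval (s0 k) h = 0) :
    (X (Sum.inl 3) : Rg k) ∣ h := by
  have := aux_sub_aeval (s0 k) (Ideal.span {X (Sum.inl 3)}) (fun v => by
    by_cases hv : v = Sum.inl 3
    · subst hv; simp [s0, Ideal.mem_span_singleton]
    · simp [s0, hv]) h
  rw [hh, sub_zero, Ideal.mem_span_singleton] at this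
  exact this

lemma cancel_x3 (q : Rg k) (h : (gP k) ∣ X (Sum.inl 3) * q) : (gP k) ∣ q := by
  obtain ⟨h1, hh1⟩ := h
  have hev : aeval (s0 k) h1 = 0 := by
    have := congrArg (aeval (s0 k)) hh1
    simp [s0, gP] at this
    rcases this with hg | h0
    · exact absurd hg (by simpa [gP] using gP_ne_zero k)
    · simpa [aeval_eq_bind₁] using h0
  obtain ⟨h2, hh2⟩ := x3_dvd_of_ev0_eq_zero k h1 hev
  refine ⟨h2, mul_left_cancel₀ (X_ne_zero (Sum.inl 3)) ?_⟩
  rw [hh1, hh2]; ring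

/-- Substitution setting `x₀, x₁, x₂` to `0`. -/
noncomputable def s1 : Vr → Rg k := fun v =>
  if v = Sum.inl 0 ∨ v = Sum.inl 1 ∨ v = Sum.inl 2 then 0 else X v

end AuxMain

/-- In `ℙ³ × ℙ² × ℙ¹` with coordinates `x, y, z`, let
`I = ⟨x_i y_j - x_j y_i : i ≠ j ∈ {0,1,2}⟩ + ⟨x₀z₁ - x₁z₀, y₁z₀ - y₀z₁⟩` be the ideal of
the iterated blowup of `ℙ³` at the point `p = [0:0:0:1]` and then at the proper
transform of the line `L = V(x₀, x₁)`.  The fiber over `p`, defined by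
`I + ⟨x₀, x₁, x₂⟩` (after saturation in the `x`-variables), is cut out in
`{p} × ℙ² × ℙ¹` by the single equation `y₁z₀ - y₀z₁ = 0`, i.e. it is the blowup of `ℙ²`
at the point `[0:0:1]`. -/
theorem stmt_19 (k : Type) [Field k] [IsAlgClosed k]
    (I : Ideal (MvPolynomial (Fin 4 ⊕ Fin 3 ⊕ Fin 2) k))
    (hI : I = Ideal.span
      ({f : MvPolynomial (Fin 4 ⊕ Fin 3 ⊕ Fin 2) k | ∃ i j : Fin 3, i ≠ j ∧
          f = X (Sum.inl i.castSucc) * X (Sum.inr (Sum.inl j)) -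
            X (Sum.inl j.castSucc) * X (Sum.inr (Sum.inl i))} ∪
        {X (Sum.inl 0) * X (Sum.inr (Sum.inr 1)) -
            X (Sum.inl 1) * X (Sum.inr (Sum.inr 0)),
          X (Sum.inr (Sum.inl 1)) * X (Sum.inr (Sum.inr 0)) -
            X (Sum.inr (Sum.inl 0)) * X (Sum.inr (Sum.inr 1))})) :
    ∀ f : MvPolynomial (Fin 4 ⊕ Fin 3 ⊕ Fin 2) k,
      (∃ N : ℕ, ∀ j : Fin 4, X (Sum.inl j) ^ N * f ∈
          I ⊔ Ideal.span ({X (Sum.inl 0), X (Sum.inl 1), X (Sum.inl 2)} :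
            Set (MvPolynomial (Fin 4 ⊕ Fin 3 ⊕ Fin 2) k))) ↔
        f ∈ Ideal.span
          ({X (Sum.inl 0), X (Sum.inl 1), X (Sum.inl 2),
            X (Sum.inr (Sum.inl 1)) * X (Sum.inr (Sum.inr 0)) -
              X (Sum.inr (Sum.inl 0)) * X (Sum.inr (Sum.inr 1))} :
            Set (MvPolynomial (Fin 4 ⊕ Fin 3 ⊕ Fin 2) k)) := by
  intro f
  set J : Ideal (Rg k) := Ideal.span
      ({X (Sum.inl 0), X (Sum.inl 1), X (Sum.inl 2), gP k} : Set (Rg k)) with hJ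
  set M : Ideal (Rg k) := Ideal.span
      ({X (Sum.inl 0), X (Sum.inl 1), X (Sum.inl 2)} : Set (Rg k)) with hM
  have hxJ : ∀ i : Fin 3, (X (Sum.inl i.castSucc) : Rg k) ∈ J := by
    intro i; fin_cases i <;> exact Ideal.subset_span (by simp [Fin.ext_iff])
  have hx01J : ∀ v : Vr, v = Sum.inl 0 ∨ v = Sum.inl 1 ∨ v = Sum.inl 2 →
      (X v : Rg k) ∈ J := by
    rintro v (rfl | rfl | rfl) <;> exact Ideal.subset_span (by simp)
  have hgJ : gP k ∈ J := Ideal.subset_span (by simp)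
  -- I ⊔ M = J
  have hIM : I ⊔ M = J := by
    apply le_antisymm
    · apply sup_le
      · rw [hI]
        apply Ideal.span_le.2
        rintro p (⟨i, j, hij, rfl⟩ | hp)
        · exact J.sub_mem (J.mul_mem_right _ (hxJ i)) (J.mul_mem_right _ (hxJ j))
        · rcases hp with rfl | rfl
          · exact J.sub_mem
              (J.mul_mem_right _ (hx01J _ (Or.inl rfl)))
              (J.mul_mem_right _ (hx01J _ (Or.inr (Or.inl rfl))))
          · exact hgJ
      · exact Ideal.span_mono (by intro a ha; simp at ha; rcases ha with rfl | rfl | rfl <;> simp)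
    · apply Ideal.span_le.2
      rintro p hp
      simp only [Set.mem_insert_iff, Set.mem_singleton_iff] at hp
      rcases hp with rfl | rfl | rfl | rfl
      · exact Ideal.mem_sup_right (Ideal.subset_span (by simp))
      · exact Ideal.mem_sup_right (Ideal.subset_span (by simp))
      · exact Ideal.mem_sup_right (Ideal.subset_span (by simp))
      · refine Ideal.mem_sup_left ?_
        rw [hI]
        exact Ideal.subset_span (Or.inr (by simp [gP]))
  -- image of J under s1 is divisible by gP
  have hφJ : ∀ p ∈ J, gP k ∣ aeval (s1 k) p := by
    intro p hp
    have hmap : aeval (s1 k) p ∈ Ideal.map (aeval (s1 k)) J :=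
      Ideal.mem_map_of_mem _ hp
    rw [hJ, Ideal.map_span] at hmap
    have hle : Ideal.span ((aeval (s1 k)) ''
        ({X (Sum.inl 0), X (Sum.inl 1), X (Sum.inl 2), gP k} : Set (Rg k))) ≤
        Ideal.span {gP k} := by
      apply Ideal.span_le.2
      rintro _ ⟨a, ha, rfl⟩
      simp only [Set.mem_insert_iff, Set.mem_singleton_iff] at ha
      rcases ha with rfl | rfl | rfl | rfl <;>
        · show _ ∈ Ideal.span {gP k}
          simp [s1, gP, Ideal.mem_span_singleton]
    rw [← Ideal.mem_span_singleton]
    exact hle hmap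
  -- step: multiplication by x₃ can be cancelled
  have hstep : ∀ q : Rg k, X (Sum.inl 3) * q ∈ J → q ∈ J := by
    intro q hq
    have h1 : gP k ∣ aeval (s1 k) (X (Sum.inl 3) * q) := hφJ _ hq
    rw [map_mul] at h1
    have hx3 : aeval (s1 k) (X (Sum.inl 3) : Rg k) = X (Sum.inl 3) := by simp [s1]
    rw [hx3] at h1
    have h2 : gP k ∣ aeval (s1 k) q := cancel_x3 k _ h1
    have h3 : aeval (s1 k) q ∈ J := by
      obtain ⟨c, hc⟩ := h2
      rw [hc]; exact J.mul_mem_right _ hgJ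
    have h4 : q - aeval (s1 k) q ∈ J := by
      refine aux_sub_aeval (s1 k) J (fun v => ?_) q
      by_cases hv : v = Sum.inl 0 ∨ v = Sum.inl 1 ∨ v = Sum.inl 2
      · simp only [s1, if_pos hv, sub_zero]
        exact hx01J v hv
      · simp [s1, hv]
    simpa using J.add_mem h4 h3
  have hsat : ∀ (N : ℕ) (q : Rg k), X (Sum.inl 3) ^ N * q ∈ J → q ∈ J := by
    intro N
    induction N with
    | zero => intro q hq; simpa using hq
    | succ n ih =>
      intro q hq
      refine hstep q (ih _ ?_)
      rw [← mul_assoc, ← pow_succ]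
      exact hq
  constructor
  · rintro ⟨N, hN⟩
    have h3 := hN 3
    rw [hIM] at h3
    exact hsat N f h3
  · intro hf
    exact ⟨0, fun j => by rw [pow_zero, one_mul, hIM]; exact hf⟩
end
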